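/- Let v be a convex function on a domain Ω ⊆ ℝᵐ. Then the set of vectors p ∈ ℝᵐ that belong to the subgradient set ∂v(x) of more than one point x ∈ Ω has Lebesgue measure zero. -/

import Mathlib

/-!
Let `f n` be the Legendre transform of `v` restricted to those points of `Ω` where `‖x‖ ≤ n` and
`v x ≥ -n` (the lower bound keeps the supremum finite). As a supremum of affine functions of `p`
with slopes of norm at most `n`, `f n` is `n`-Lipschitz, hence differentiable almost everywhere by
Rademacher's theorem. If `p` is a subgradient of `v` at two points `x ≠ x'`, then for `n` large
both `x` and `x'` are subgradients of `f n` at `p`, so `f n` is not differentiable at `p`. The bad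
set is thus covered by countably many null sets.
-/

open Set MeasureTheory
open scoped RealInnerProductSpace

namespace Stmt16

/-- The subgradient set of `v` at `x`, relative to the set `S`. -/
def subgradientSet {m : ℕ} (S : Set (EuclideanSpace ℝ (Fin m)))
    (v : EuclideanSpace ℝ (Fin m) → ℝ) (x : EuclideanSpace ℝ (Fin m)) :
    Set (EuclideanSpace ℝ (Fin m)) :=
  {p | ∀ y ∈ S, v x + (inner ℝ p (y - x) : ℝ) ≤ v y}

theorem lipschitzWith_ciSup {ι α : Type*} [PseudoMetricSpace α] {f : ι → α → ℝ} {K : NNReal}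
    (hf : ∀ i, LipschitzWith K (f i)) (hbdd : ∀ x, BddAbove (range fun i ↦ f i x)) :
    LipschitzWith K fun x ↦ ⨆ i, f i x := by
  cases isEmpty_or_nonempty ι
  · simpa only [Real.iSup_of_isEmpty] using LipschitzWith.const' (α := α) (0 : ℝ)
  refine LipschitzWith.of_le_add_mul K fun x y ↦ ciSup_le fun i ↦ ?_
  calc f i x ≤ f i y + K * dist x y := (hf i).le_add_mul x y
    _ ≤ (⨆ j, f j y) + K * dist x y := by gcongr; exact le_ciSup (hbdd y) i

theorem fderiv_eq_innerSL_of_forall_add_inner_le {E : Type*} [NormedAddCommGroup E]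
    [InnerProductSpace ℝ E] {f : E → ℝ} {f' : E →L[ℝ] ℝ} {p x : E} (hf : HasFDerivAt f f' p)
    (hx : ∀ q, f p + ⟪x, q - p⟫ ≤ f q) : f' = innerSL ℝ x := by
  have hmin : IsLocalMin (fun q ↦ f q - ⟪x, q⟫) p := Filter.Eventually.of_forall fun q ↦ by
    have := hx q
    rw [inner_sub_right] at this
    dsimp only
    linarith
  exact sub_eq_zero.1 (hmin.hasFDerivAt_eq_zero (hf.sub (innerSL ℝ x).hasFDerivAt))

variable {E : Type*} [NormedAddCommGroup E]

def truncation (S : Set E) (v : E → ℝ) (n : ℕ) : Set E :=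
  {y ∈ S | ‖y‖ ≤ n ∧ -(n : ℝ) ≤ v y}

variable {S : Set E} {v : E → ℝ} {n : ℕ}

theorem eventually_mem_truncation {x : E} (hx : x ∈ S) :
    ∀ᶠ n : ℕ in Filter.atTop, x ∈ truncation S v n := by
  filter_upwards [Filter.eventually_ge_atTop ⌈max ‖x‖ (-v x)⌉₊] with n hn
  have hmax : max ‖x‖ (-v x) ≤ n := Nat.ceil_le.1 hn
  exact ⟨hx, le_of_max_le_left hmax, neg_le.1 (le_of_max_le_right hmax)⟩

variable [InnerProductSpace ℝ E]

noncomputable def truncatedConjugate (S : Set E) (v : E → ℝ) (n : ℕ) (p : E) : ℝ :=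
  ⨆ y : truncation S v n, ⟪p, (y : E)⟫ - v y

theorem bddAbove_inner_sub_truncation (S : Set E) (v : E → ℝ) (n : ℕ) (p : E) :
    BddAbove (range fun y : truncation S v n ↦ ⟪p, (y : E)⟫ - v y) := by
  refine ⟨‖p‖ * n + n, forall_mem_range.2 fun ⟨y, _, hyn, hvy⟩ ↦ ?_⟩
  have : ⟪p, y⟫ ≤ ‖p‖ * n :=
    (real_inner_le_norm p y).trans (mul_le_mul_of_nonneg_left hyn (norm_nonneg p))
  dsimp only
  linarith

theorem lipschitzWith_truncatedConjugate (S : Set E) (v : E → ℝ) (n : ℕ) :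
    LipschitzWith n (truncatedConjugate S v n) := by
  refine lipschitzWith_ciSup (fun ⟨y, _, hyn, _⟩ ↦ ?_) (bddAbove_inner_sub_truncation S v n)
  refine LipschitzWith.of_le_add_mul _ fun p q ↦ ?_
  have : ⟪p - q, y⟫ ≤ n * dist p q := by
    rw [dist_eq_norm, mul_comm]
    exact (real_inner_le_norm _ _).trans (mul_le_mul_of_nonneg_left hyn (norm_nonneg _))
  rw [inner_sub_left] at this
  push_cast
  linarith

theorem inner_sub_le_truncatedConjugate {y : E} (hy : y ∈ truncation S v n) (p : E) :
    ⟪p, y⟫ - v y ≤ truncatedConjugate S v n p :=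
  le_ciSup (bddAbove_inner_sub_truncation S v n p) ⟨y, hy⟩

theorem add_inner_le_truncatedConjugate {p x : E} (hx : x ∈ truncation S v n)
    (hpx : ∀ y ∈ S, v x + ⟪p, y - x⟫ ≤ v y) (q : E) :
    truncatedConjugate S v n p + ⟪x, q - p⟫ ≤ truncatedConjugate S v n q := by
  have : Nonempty (truncation S v n) := ⟨⟨x, hx⟩⟩
  have hattained : truncatedConjugate S v n p ≤ ⟪p, x⟫ - v x :=
    ciSup_le fun ⟨y, hyS, _⟩ ↦ by
      have := hpx y hyS
      rw [inner_sub_right] at this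
      linarith
  have hq := inner_sub_le_truncatedConjugate hx q
  rw [inner_sub_right, real_inner_comm q x, real_inner_comm p x]
  linarith

theorem not_differentiableAt_truncatedConjugate {p x x' : E} (hx : x ∈ truncation S v n)
    (hx' : x' ∈ truncation S v n) (hne : x ≠ x') (hpx : ∀ y ∈ S, v x + ⟪p, y - x⟫ ≤ v y)
    (hpx' : ∀ y ∈ S, v x' + ⟪p, y - x'⟫ ≤ v y) :
    ¬DifferentiableAt ℝ (truncatedConjugate S v n) p := fun hd ↦
  hne <| innerSL_inj.1 <|
    (fderiv_eq_innerSL_of_forall_add_inner_le hd.hasFDerivAt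
      (add_inner_le_truncatedConjugate hx hpx)).symm.trans
    (fderiv_eq_innerSL_of_forall_add_inner_le hd.hasFDerivAt
      (add_inner_le_truncatedConjugate hx' hpx'))

theorem measure_zero_of_multivalued_subgradients_general (m : ℕ)
    (Ω : Set (EuclideanSpace ℝ (Fin m)))
    (v : EuclideanSpace ℝ (Fin m) → ℝ) :
    volume {p : EuclideanSpace ℝ (Fin m) | ∃ x ∈ Ω, ∃ x' ∈ Ω, x ≠ x' ∧
      p ∈ subgradientSet Ω v x ∧ p ∈ subgradientSet Ω v x'} = 0 := by
  refine measure_mono_null (t := ⋃ n : ℕ, {p | ¬DifferentiableAt ℝ (truncatedConjugate Ω v n) p})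
    ?_ (measure_iUnion_null fun n ↦ ?_)
  · rintro p ⟨x, hx, x', hx', hne, hpx, hpx'⟩
    obtain ⟨n, hxn, hx'n⟩ :=
      ((eventually_mem_truncation (v := v) hx).and (eventually_mem_truncation hx')).exists
    exact mem_iUnion.2 ⟨n, not_differentiableAt_truncatedConjugate hxn hx'n hne hpx hpx'⟩
  · exact ae_iff.1 (lipschitzWith_truncatedConjugate Ω v n).ae_differentiableAt

/-- for a convex function `v` on a domain `Ω ⊆ ℝᵐ`, the set of vectors
`p` belonging to the subgradient set of more than one point of `Ω` has Lebesgue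
measure zero. -/
theorem measure_zero_of_multivalued_subgradients (m : ℕ)
    (Ω : Set (EuclideanSpace ℝ (Fin m))) (hΩopen : IsOpen Ω) (hΩconv : Convex ℝ Ω)
    (v : EuclideanSpace ℝ (Fin m) → ℝ) (hv : ConvexOn ℝ Ω v) :
    volume {p : EuclideanSpace ℝ (Fin m) | ∃ x ∈ Ω, ∃ x' ∈ Ω, x ≠ x' ∧
      p ∈ subgradientSet Ω v x ∧ p ∈ subgradientSet Ω v x'} = 0 :=
  measure_zero_of_multivalued_subgradients_general m Ω v

end Stmt16
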